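/- Let G be a connected multigraph as above which is 2-connected, let v ∈ V, and suppose [{v}] = x + y in Λ(G) with x·y = −1. Then there is a partition of V∖{v} into nonempty sets R and S, each inducing a connected subgraph of G, with exactly one edge of G between R and S (i.e. Σ_{u∈R, w∈S} e(u,w) = 1), such that {x, y} = {[R ∪ {v}], [S ∪ {v}]} in Λ(G). Furthermore, there exist unique vertices u_1, u_2 ∈ V∖{v} with x·[{u_1}] = 1 and y·[{u_2}] = 1, and every vertex w ∉ {v, u_1, u_2} satisfies x·[{w}] ≤ 0 and y·[{w}] ≤ 0. -/

import Mathlib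

/-!
Write `x = [ξ]` and `y = [δ_v - ξ]`. Expanded over ordered pairs, `2 B(ξ, δ_v - ξ)` is a sum of
terms `e(p,q) · d · (c - d)`, where `d` is the jump of `ξ` and `c ∈ {-1, 0, 1}` that of `δ_v`
along `pq`; each term is `≤ 0`. A total of `-2` therefore forces a single simple edge `u₀ w₀`
avoiding `v` on which `ξ` jumps by one, while `ξ` is constant along every other edge of `G - v`
and drops by at most one along edges at `v`. Since `G - v` is connected, `ξ` takes two values on
`V ∖ {v}`, which splits it into `R ∋ u₀` and `S ∋ w₀` joined only by `u₀ w₀`; each side stays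
connected. Since `G - u₀` and `G - w₀` are connected, `v` has neighbours on both sides, which
pins `ξ v = ξ u₀`, so `x = [R ∪ {v}]` and `y = [S ∪ {v}]`. The pairing of `[R ∪ {v}]` with
`[{u}]` counts the edges from `u` leaving `R ∪ {v}` (negatively if `u ∉ R ∪ {v}`).
-/

/-- The underlying simple graph of the multigraph with `e u v` edges joining `u` and
`v`: vertices `u ≠ v` are adjacent iff there is at least one edge between them. -/
def mgraph {V : Type*} (e : V → V → ℕ) : SimpleGraph V :=
  SimpleGraph.fromRel (fun u v => 0 < e u v)

/-- The bilinear pairing on `ℤ^V` given by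
`B(x,y) = Σ_{unordered pairs {u,w}} e(u,w)(x_u − x_w)(y_u − y_w)`
(written as half of the sum over ordered pairs; the division is exact since `e` is
symmetric). -/
def Bform {V : Type*} [Fintype V] (e : V → V → ℕ) (x y : V → ℤ) : ℤ :=
  (∑ u, ∑ w, (e u w : ℤ) * (x u - x w) * (y u - y w)) / 2

/-- The graph lattice `Λ(G) = ℤ^V / ℤ·[V]`, the quotient of `ℤ^V` by the span of the
all-ones vector. -/
abbrev GLat (V : Type*) [Fintype V] :=
  (V → ℤ) ⧸ (Submodule.span ℤ {(fun _ => (1 : ℤ) : V → ℤ)})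

/-- The class of `x : ℤ^V` in the graph lattice `Λ(G)`. -/
abbrev glmk {V : Type*} [Fintype V] (x : V → ℤ) : GLat V := Submodule.Quotient.mk x

/-- The pairing induced by `Bform` on the graph lattice, computed on (arbitrary)
representatives; it is well defined since `Bform` vanishes against constant vectors. -/
noncomputable def qform {V : Type*} [Fintype V] (e : V → V → ℕ) (a b : GLat V) : ℤ :=
  Bform e (Quotient.out a) (Quotient.out b)

/-- The indicator vector `[R] ∈ ℤ^V` of a finite subset `R ⊆ V`. -/
def indFn {V : Type*} [DecidableEq V] (R : Finset V) : V → ℤ :=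
  fun u => if u ∈ R then 1 else 0

open Finset SimpleGraph

section Lattice

variable {V : Type*} [Fintype V]

lemma glmk_eq_glmk_iff {a b : V → ℤ} : glmk a = glmk b ↔ ∃ c : ℤ, ∀ u, a u - b u = c := by
  rw [Submodule.Quotient.eq, Submodule.mem_span_singleton]
  constructor
  · rintro ⟨c, hc⟩
    exact ⟨c, fun u => by simpa using (congrFun hc u).symm⟩
  · rintro ⟨c, hc⟩
    exact ⟨c, funext fun u => by simp [hc u]⟩

lemma Bform_congr_of_sub_const (e : V → V → ℕ) {a a' b b' : V → ℤ}
    (ha : ∃ c : ℤ, ∀ u, a' u - a u = c) (hb : ∃ c : ℤ, ∀ u, b' u - b u = c) :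
    Bform e a' b' = Bform e a b := by
  obtain ⟨c, hc⟩ := ha
  obtain ⟨d, hd⟩ := hb
  have ha' : ∀ p q, a' p - a' q = a p - a q := fun p q => by linarith [hc p, hc q]
  have hb' : ∀ p q, b' p - b' q = b p - b q := fun p q => by linarith [hd p, hd q]
  simp only [Bform, ha', hb']

lemma qform_mk (e : V → V → ℕ) (a b : V → ℤ) : qform e (glmk a) (glmk b) = Bform e a b :=
  Bform_congr_of_sub_const e (glmk_eq_glmk_iff.1 (Quotient.out_eq _))
    (glmk_eq_glmk_iff.1 (Quotient.out_eq _))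

variable [DecidableEq V] {e : V → V → ℕ}

lemma Bform_indFn_singleton (hsym : ∀ u w, e u w = e w u) (x : V → ℤ) (u : V) :
    Bform e x (indFn {u}) = ∑ w, (e u w : ℤ) * (x u - x w) := by
  set S := ∑ w, (e u w : ℤ) * (x u - x w)
  have h₁ : ∑ p, ∑ q, (e p q : ℤ) * (x p - x q) * indFn {u} p = S := by
    simp [indFn, S]
  have h₂ : ∑ p, ∑ q, (e p q : ℤ) * (x p - x q) * indFn {u} q = -S := by
    rw [sum_comm]
    simp only [indFn, mem_singleton, mul_ite, mul_one, mul_zero, sum_ite_irrel, sum_const_zero,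
      sum_ite_eq', mem_univ, ↓reduceIte, ← sum_neg_distrib, S]
    exact sum_congr rfl fun w _ => by rw [hsym]; ring
  have : ∑ p, ∑ q, (e p q : ℤ) * (x p - x q) * (indFn {u} p - indFn {u} q) = 2 * S := by
    simp only [mul_sub (_ * _), sum_sub_distrib, h₁, h₂]; ring
  rw [Bform, this, Int.mul_ediv_cancel_left _ two_ne_zero]

lemma Bform_indFn_singleton_of_mem (hsym : ∀ u w, e u w = e w u) {A : Finset V} {u : V}
    (hu : u ∈ A) : Bform e (indFn A) (indFn {u}) = ∑ w ∈ Aᶜ, (e u w : ℤ) := by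
  rw [Bform_indFn_singleton hsym]
  simp [indFn, hu, apply_ite, sum_ite, filter_not, compl_eq_univ_sdiff]

lemma Bform_indFn_singleton_nonpos (hsym : ∀ u w, e u w = e w u) {A : Finset V} {u : V}
    (hu : u ∉ A) : Bform e (indFn A) (indFn {u}) ≤ 0 := by
  rw [Bform_indFn_singleton hsym]
  refine sum_nonpos fun w _ => mul_nonpos_of_nonneg_of_nonpos (by positivity) ?_
  simp only [indFn, hu, if_false]
  split_ifs <;> norm_num

end Lattice

lemma mgraph_adj {V : Type*} {e : V → V → ℕ} (hsym : ∀ u w, e u w = e w u) {a b : V} :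
    (mgraph e).Adj a b ↔ a ≠ b ∧ 0 < e a b := by
  simp [mgraph, hsym b a]

namespace SimpleGraph

variable {V : Type*} {G : SimpleGraph V} {T : Set V}

lemma induce_forall_of_adj_closed (hT : (G.induce T).Connected) {P : V → Prop}
    (hP : ∀ a ∈ T, ∀ b ∈ T, G.Adj a b → P a → P b) {a b : V} (ha : a ∈ T) (hb : b ∈ T)
    (hPa : P a) : P b := by
  by_contra hPb
  obtain ⟨w⟩ := hT.preconnected ⟨a, ha⟩ ⟨b, hb⟩
  obtain ⟨d, -, hd₁, hd₂⟩ := w.exists_boundary_dart {u | P u} hPa hPb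
  exact hd₂ (hP _ d.fst.2 _ d.snd.2 d.adj hd₁)

lemma induce_connected_of_boundary_eq (hT : (G.induce T).Connected) {R : Set V} (hRT : R ⊆ T)
    {r₀ : V} (hr₀ : r₀ ∈ R) (hbdry : ∀ a ∈ T, ∀ b ∈ R, a ∉ R → G.Adj a b → b = r₀) :
    (G.induce R).Connected := by
  have hreach : ∀ b ∈ T, ∀ hb : b ∈ R, (G.induce R).Reachable ⟨b, hb⟩ ⟨r₀, hr₀⟩ := by
    intro b hb
    refine induce_forall_of_adj_closed hT
      (P := fun b => ∀ hb : b ∈ R, (G.induce R).Reachable ⟨b, hb⟩ ⟨r₀, hr₀⟩) ?_ (hRT hr₀) hb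
      fun _ => Reachable.refl _
    intro a ha c _ hac hPa hcR
    by_cases haR : a ∈ R
    · have hca : (G.induce R).Adj ⟨c, hcR⟩ ⟨a, haR⟩ := hac.symm
      exact hca.reachable.trans (hPa haR)
    · obtain rfl := hbdry a ha c hcR haR hac
      rfl
  exact (connected_iff_exists_forall_reachable _).2
    ⟨⟨r₀, hr₀⟩, fun ⟨b, hb⟩ => (hreach b (hRT hb) hb).symm⟩

end SimpleGraph

structure IsSingleEdgeCut {V : Type*} [DecidableEq V] [Fintype V] (e : V → V → ℕ) (v : V)
    (R S : Finset V) (u₀ w₀ : V) : Prop where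
  union_eq : R ∪ S = {v}ᶜ
  disjoint : Disjoint R S
  left_mem : u₀ ∈ R
  right_mem : w₀ ∈ S
  edge_eq_one : e u₀ w₀ = 1
  eq_of_pos : ∀ a ∈ R, ∀ b ∈ S, 0 < e a b → a = u₀ ∧ b = w₀

namespace IsSingleEdgeCut

variable {V : Type*} [Fintype V] [DecidableEq V] {e : V → V → ℕ} {v u₀ w₀ : V} {R S : Finset V}
  (h : IsSingleEdgeCut e v R S u₀ w₀)
include h

lemma symm (hsym : ∀ u w, e u w = e w u) : IsSingleEdgeCut e v S R w₀ u₀ where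
  union_eq := by rw [union_comm, h.union_eq]
  disjoint := h.disjoint.symm
  left_mem := h.right_mem
  right_mem := h.left_mem
  edge_eq_one := by rw [hsym, h.edge_eq_one]
  eq_of_pos a ha b hb hab := (h.eq_of_pos b hb a ha (hsym a b ▸ hab)).symm

lemma ne_of_mem_left {a : V} (ha : a ∈ R) : a ≠ v := by
  have := h.union_eq ▸ mem_union_left S ha
  simpa using this

lemma ne_of_mem_right {b : V} (hb : b ∈ S) : b ≠ v := by
  have := h.union_eq ▸ mem_union_right R hb
  simpa using this

lemma ne_of_mem_left_right {a b : V} (ha : a ∈ R) (hb : b ∈ S) : a ≠ b := by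
  rintro rfl
  exact disjoint_left.1 h.disjoint ha hb

lemma mem_or_mem {a : V} (ha : a ≠ v) : a ∈ R ∨ a ∈ S :=
  mem_union.1 (h.union_eq ▸ by simpa using ha)

lemma compl_union_singleton : (R ∪ {v})ᶜ = S := by
  ext a
  simp only [mem_compl, mem_union, mem_singleton, not_or]
  exact ⟨fun ⟨haR, hav⟩ => (h.mem_or_mem hav).resolve_left haR,
    fun haS => ⟨disjoint_right.1 h.disjoint haS, h.ne_of_mem_right haS⟩⟩

lemma sum_edges_eq_ite {a : V} (ha : a ∈ R) : ∑ b ∈ S, e a b = if a = u₀ then 1 else 0 := by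
  split_ifs with hau
  · subst hau
    rw [sum_eq_single_of_mem w₀ h.right_mem fun b hb hbw => ?_, h.edge_eq_one]
    by_contra hne
    exact hbw (h.eq_of_pos a ha b hb (Nat.pos_of_ne_zero hne)).2
  · refine sum_eq_zero fun b hb => ?_
    by_contra hne
    exact hau (h.eq_of_pos a ha b hb (Nat.pos_of_ne_zero hne)).1

lemma sum_sum_edges_eq_one : ∑ a ∈ R, ∑ b ∈ S, e a b = 1 := by
  rw [sum_congr rfl fun a ha => h.sum_edges_eq_ite ha, sum_ite_eq' R u₀, if_pos h.left_mem]

lemma Bform_indFn_le_ite (hsym : ∀ u w, e u w = e w u) {u : V} (hu : u ≠ v) :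
    Bform e (indFn (R ∪ {v})) (indFn {u}) ≤ if u = u₀ then 1 else 0 := by
  rcases h.mem_or_mem hu with huR | huS
  · rw [Bform_indFn_singleton_of_mem hsym (mem_union_left _ huR), h.compl_union_singleton,
      ← Nat.cast_sum, h.sum_edges_eq_ite huR]
    split_ifs <;> simp
  · have := Bform_indFn_singleton_nonpos hsym
      (show u ∉ R ∪ {v} by simp [disjoint_right.1 h.disjoint huS, hu])
    split_ifs <;> omega

lemma Bform_indFn_left_mem (hsym : ∀ u w, e u w = e w u) :
    Bform e (indFn (R ∪ {v})) (indFn {u₀}) = 1 := by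
  rw [Bform_indFn_singleton_of_mem hsym (mem_union_left _ h.left_mem), h.compl_union_singleton,
    ← Nat.cast_sum, h.sum_edges_eq_ite h.left_mem, if_pos rfl, Nat.cast_one]

lemma eq_of_Bform_indFn_eq_one (hsym : ∀ u w, e u w = e w u) {u : V} (hu : u ≠ v)
    (h₁ : Bform e (indFn (R ∪ {v})) (indFn {u}) = 1) : u = u₀ := by
  have := h.Bform_indFn_le_ite hsym hu
  split_ifs at this with hu₀
  exacts [hu₀, by omega]

lemma Bform_indFn_nonpos (hsym : ∀ u w, e u w = e w u) {u : V} (hu : u ≠ v) (hu₀ : u ≠ u₀) :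
    Bform e (indFn (R ∪ {v})) (indFn {u}) ≤ 0 := by
  simpa [hu₀] using h.Bform_indFn_le_ite hsym hu

lemma glmk_indFn_singleton :
    glmk (indFn {v}) = glmk (indFn (R ∪ {v})) + glmk (indFn (S ∪ {v})) := by
  rw [← Submodule.Quotient.mk_add, glmk_eq_glmk_iff]
  refine ⟨-1, fun u => ?_⟩
  by_cases huv : u = v
  · simp [indFn, huv]
  · rcases h.mem_or_mem huv with huR | huS
    · simp [indFn, huv, huR, disjoint_left.1 h.disjoint huR]
    · simp [indFn, huv, huS, disjoint_right.1 h.disjoint huS]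

lemma induce_connected (hsym : ∀ u w, e u w = e w u)
    (hconn : ((mgraph e).induce (({v}ᶜ : Finset V) : Set V)).Connected) :
    ((mgraph e).induce (R : Set V)).Connected := by
  refine induce_connected_of_boundary_eq hconn (fun a ha => by simpa using h.ne_of_mem_left ha)
    h.left_mem fun a ha b hb haR hab => ?_
  have haS : a ∈ S := (h.mem_or_mem (by simpa using ha)).resolve_left haR
  exact (h.eq_of_pos b hb a haS (hsym a b ▸ ((mgraph_adj hsym).1 hab).2)).1

lemma exists_pos_left (hsym : ∀ u w, e u w = e w u)
    (hconn : ((mgraph e).induce (({w₀}ᶜ : Finset V) : Set V)).Connected) :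
    ∃ a ∈ R, 0 < e v a := by
  by_contra! hv
  have hvR : v ∈ R := by
    refine induce_forall_of_adj_closed hconn (P := (· ∈ R)) ?_
      (by simpa using h.ne_of_mem_left_right h.left_mem h.right_mem)
      (by simpa using (h.ne_of_mem_right h.right_mem).symm) h.left_mem
    intro a _ b hb hab haR
    obtain ⟨-, hpos⟩ := (mgraph_adj hsym).1 hab
    have hbv : b ≠ v := by
      rintro rfl
      have := hv a haR
      rw [hsym] at hpos
      omega
    refine (h.mem_or_mem hbv).resolve_right fun hbS => ?_
    exact (by simpa using hb : b ≠ w₀) (h.eq_of_pos a haR b hbS hpos).2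
  exact h.ne_of_mem_left hvR rfl

end IsSingleEdgeCut

lemma mul_sub_nonpos_of_abs_le_one {c d : ℤ} (hc : |c| ≤ 1) : d * (c - d) ≤ 0 := by
  obtain rfl | rfl | rfl : c = -1 ∨ c = 0 ∨ c = 1 := by have := abs_le.1 hc; omega
  all_goals nlinarith [Int.le_self_sq d, Int.le_self_sq (-d)]

lemma eq_one_of_mul_mul_sub_eq_neg_one {E c d : ℤ} (hE : 0 ≤ E) (h : E * (d * (c - d)) = -1) :
    E = 1 ∧ c = 0 ∧ (d = 1 ∨ d = -1) := by
  have hE₁ : E = 1 := (Int.eq_one_or_neg_one_of_mul_eq_neg_one h).resolve_right (by omega)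
  subst hE₁
  rw [one_mul] at h
  rcases Int.eq_one_or_neg_one_of_mul_eq_neg_one h with rfl | rfl <;> omega

lemma exists_pair_of_neg_two_le_sum {α : Type*} [Fintype α] {f : α → α → ℤ}
    (hf : ∀ a b, f a b ≤ 0) (hsymm : ∀ a b, f a b = f b a) (hdiag : ∀ a, f a a = 0)
    (hlo : -2 ≤ ∑ a, ∑ b, f a b) (hhi : ∑ a, ∑ b, f a b < 0) :
    ∃ p q, f p q = -1 ∧ ∀ a b, f a b ≠ 0 → a = p ∧ b = q ∨ a = q ∧ b = p := by
  classical
  have hsub : ∀ s : Finset (α × α), -2 ≤ ∑ x ∈ s, f x.1 x.2 := fun s =>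
    hlo.trans <| by
      rw [← Fintype.sum_prod_type']
      exact sum_le_sum_of_subset_of_nonpos' (subset_univ s) fun x _ _ => hf _ _
  obtain ⟨p, q, hpq⟩ : ∃ p q, f p q < 0 := by
    by_contra! h
    exact hhi.not_ge (sum_nonneg fun a _ => sum_nonneg fun b _ => h a b)
  have hne : (p, q) ≠ (q, p) := by
    intro h
    obtain rfl : p = q := congrArg Prod.fst h
    exact hpq.ne (hdiag p)
  have hpair := hsub {(p, q), (q, p)}
  rw [sum_pair hne, ← hsymm p q] at hpair
  dsimp only at hpair
  refine ⟨p, q, by omega, fun a b hab => ?_⟩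
  by_contra hout
  have hmem : (a, b) ∉ ({(p, q), (q, p)} : Finset (α × α)) := by simpa [Prod.ext_iff] using hout
  have htriple := hsub (insert (a, b) {(p, q), (q, p)})
  rw [sum_insert hmem, sum_pair hne, ← hsymm p q] at htriple
  dsimp only at htriple
  have := hf a b
  omega

section PairTerm

variable {V : Type*} [DecidableEq V] {e : V → V → ℕ} {v : V} {ξ : V → ℤ}

def pairTerm (e : V → V → ℕ) (v : V) (ξ : V → ℤ) (p q : V) : ℤ :=
  e p q * ((ξ p - ξ q) * ((indFn {v} p - indFn {v} q) - (ξ p - ξ q)))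

lemma pairTerm_nonpos (p q : V) : pairTerm e v ξ p q ≤ 0 := by
  refine mul_nonpos_of_nonneg_of_nonpos (by positivity) (mul_sub_nonpos_of_abs_le_one ?_)
  simp only [indFn]
  split_ifs <;> norm_num

lemma pairTerm_comm (hsym : ∀ u w, e u w = e w u) (p q : V) :
    pairTerm e v ξ p q = pairTerm e v ξ q p := by
  simp only [pairTerm, hsym p q]
  ring

lemma pairTerm_eq_neg_one {p q : V} (h : pairTerm e v ξ p q = -1) :
    e p q = 1 ∧ p ≠ v ∧ q ≠ v ∧ (ξ p = ξ q + 1 ∨ ξ q = ξ p + 1) := by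
  obtain ⟨he, hc, hd⟩ := eq_one_of_mul_mul_sub_eq_neg_one (by positivity) h
  have hqp : q ≠ p := by rintro rfl; omega
  refine ⟨by exact_mod_cast he, ?_, ?_, by omega⟩ <;> rintro rfl
  · simp [indFn, hqp] at hc
  · simp [indFn, hqp.symm] at hc

lemma pairTerm_eq_zero {a b : V} (hab : 0 < e a b) (h : pairTerm e v ξ a b = 0) :
    ξ a = ξ b ∨ ξ a - ξ b = indFn {v} a - indFn {v} b := by
  rcases mul_eq_zero.1 h with h | h
  · omega
  · rcases mul_eq_zero.1 h with h | h <;> omega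

end PairTerm

section Potential

variable {V : Type*} [Fintype V] [DecidableEq V] {e : V → V → ℕ} {v : V} {ξ : V → ℤ}

lemma Bform_indFn_sub_eq (e : V → V → ℕ) (v : V) (ξ : V → ℤ) :
    Bform e ξ (fun u => indFn {v} u - ξ u) = (∑ p, ∑ q, pairTerm e v ξ p q) / 2 := by
  unfold Bform pairTerm
  congr 1
  exact sum_congr rfl fun p _ => sum_congr rfl fun q _ => by ring

lemma exists_cut_edge (hsym : ∀ u w, e u w = e w u)
    (hB : Bform e ξ (fun u => indFn {v} u - ξ u) = -1) :
    ∃ u₀ w₀, u₀ ≠ v ∧ w₀ ≠ v ∧ e u₀ w₀ = 1 ∧ ξ u₀ = ξ w₀ + 1 ∧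
      (∀ a b, a ≠ v → b ≠ v → 0 < e a b → ξ a = ξ b ∨ a = u₀ ∧ b = w₀ ∨ a = w₀ ∧ b = u₀) ∧
      (∀ b, 0 < e v b → ξ b = ξ v ∨ ξ b + 1 = ξ v) := by
  rw [Bform_indFn_sub_eq] at hB
  obtain ⟨p, q, hpq, honly⟩ := exists_pair_of_neg_two_le_sum (f := pairTerm e v ξ)
    pairTerm_nonpos (pairTerm_comm hsym) (fun p => by simp [pairTerm]) (by omega) (by omega)
  wlog hd : ξ p = ξ q + 1 generalizing p q
  · have hd' := (pairTerm_eq_neg_one hpq).2.2.2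
    exact this q p (by rwa [pairTerm_comm hsym]) (fun a b hab => (honly a b hab).symm) (by omega)
  obtain ⟨he, hp, hq, -⟩ := pairTerm_eq_neg_one hpq
  have hflat : ∀ a b, 0 < e a b → ¬(a = p ∧ b = q ∨ a = q ∧ b = p) →
      ξ a = ξ b ∨ ξ a - ξ b = indFn {v} a - indFn {v} b := fun a b hab hout =>
    pairTerm_eq_zero hab (by_contra fun h => hout (honly a b h))
  refine ⟨p, q, hp, hq, he, hd, fun a b ha hb hab => ?_, fun b hb => ?_⟩
  · by_cases hpair : a = p ∧ b = q ∨ a = q ∧ b = p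
    · exact Or.inr hpair
    · have := hflat a b hab hpair
      simp only [indFn, mem_singleton, if_neg ha, if_neg hb, sub_zero] at this
      exact Or.inl (by omega)
  · by_cases hbv : b = v
    · exact Or.inl (congrArg ξ hbv)
    · have hout : ¬(v = p ∧ b = q ∨ v = q ∧ b = p) := by
        rintro (⟨h, -⟩ | ⟨h, -⟩)
        exacts [hp h.symm, hq h.symm]
      have := hflat v b hb hout
      simp only [indFn, mem_singleton, if_pos, if_neg hbv] at this
      omega

lemma eq_or_eq_of_flat (hsym : ∀ u w, e u w = e w u)
    (hconn : ((mgraph e).induce (({v}ᶜ : Finset V) : Set V)).Connected) {u₀ w₀ : V}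
    (hu₀ : u₀ ≠ v)
    (hflat : ∀ a b, a ≠ v → b ≠ v → 0 < e a b → ξ a = ξ b ∨ a = u₀ ∧ b = w₀ ∨ a = w₀ ∧ b = u₀)
    {u : V} (hu : u ≠ v) : ξ u = ξ u₀ ∨ ξ u = ξ w₀ := by
  refine induce_forall_of_adj_closed hconn (P := fun u => ξ u = ξ u₀ ∨ ξ u = ξ w₀) ?_
    (a := u₀) (by simpa using hu₀) (by simpa using hu) (Or.inl rfl)
  intro a ha b hb hab hPa
  rcases hflat a b (by simpa using ha) (by simpa using hb) ((mgraph_adj hsym).1 hab).2 with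
    h | ⟨-, rfl⟩ | ⟨-, rfl⟩
  exacts [h ▸ hPa, Or.inr rfl, Or.inl rfl]

lemma exists_isSingleEdgeCut (hsym : ∀ u w, e u w = e w u)
    (hconn : ∀ u : V, ((mgraph e).induce (({u}ᶜ : Finset V) : Set V)).Connected)
    {u₀ w₀ : V} (hu₀ : u₀ ≠ v) (hw₀ : w₀ ≠ v) (he : e u₀ w₀ = 1) (hstep : ξ u₀ = ξ w₀ + 1)
    (hflat : ∀ a b, a ≠ v → b ≠ v → 0 < e a b → ξ a = ξ b ∨ a = u₀ ∧ b = w₀ ∨ a = w₀ ∧ b = u₀)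
    (hv : ∀ b, 0 < e v b → ξ b = ξ v ∨ ξ b + 1 = ξ v) :
    ∃ R S, IsSingleEdgeCut e v R S u₀ w₀ ∧ glmk ξ = glmk (indFn (R ∪ {v})) := by
  have htwo : ∀ u, u ≠ v → ξ u = ξ u₀ ∨ ξ u = ξ w₀ := fun _ =>
    eq_or_eq_of_flat hsym (hconn v) hu₀ hflat
  set R := ({v}ᶜ : Finset V).filter (ξ · = ξ u₀)
  set S := ({v}ᶜ : Finset V).filter (ξ · = ξ w₀)
  have hcut : IsSingleEdgeCut e v R S u₀ w₀ :=
    { union_eq := by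
        ext u
        simp only [R, S, mem_union, mem_filter, mem_compl, mem_singleton]
        exact ⟨fun h => h.elim And.left And.left, fun hu => (htwo u hu).imp (⟨hu, ·⟩) (⟨hu, ·⟩)⟩
      disjoint := disjoint_filter.2 fun u _ h₁ h₂ => by omega
      left_mem := by simpa [R] using hu₀
      right_mem := by simpa [S] using hw₀
      edge_eq_one := he
      eq_of_pos := fun a ha b hb hab => by
        simp only [R, S, mem_filter, mem_compl, mem_singleton] at ha hb
        rcases hflat a b ha.1 hb.1 hab with h | h | ⟨rfl, -⟩ <;> first | exact h | omega }
  obtain ⟨a, haR, ha⟩ := hcut.exists_pos_left hsym (hconn w₀)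
  obtain ⟨b, hbS, hb⟩ := (hcut.symm hsym).exists_pos_left hsym (hconn u₀)
  have hξv : ξ v = ξ u₀ := by
    have := hv a ha
    have := hv b hb
    simp only [R, S, mem_filter] at haR hbS
    omega
  have hmem : ∀ u, u ∈ R ∪ {v} ↔ ξ u = ξ u₀ := fun u => by
    by_cases huv : u = v <;> simp [R, huv, hξv]
  refine ⟨R, S, hcut, glmk_eq_glmk_iff.2 ⟨ξ w₀, fun u => ?_⟩⟩
  simp only [indFn, hmem]
  split_ifs with h
  · omega
  · have := htwo u fun huv => h (huv ▸ hξv)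
    omega

end Potential

theorem stmt13_general {V : Type*} [Fintype V] [DecidableEq V] (e : V → V → ℕ)
    (hsym : ∀ u v, e u v = e v u)
    (h2conn : ∀ v : V, (SimpleGraph.induce (({v}ᶜ : Finset V) : Set V) (mgraph e)).Connected)
    (v : V) (x y : GLat V)
    (hsum : glmk (indFn {v}) = x + y)
    (hxy : qform e x y = -1) :
    (∃ R S : Finset V,
      R ∪ S = {v}ᶜ ∧ R ∩ S = ∅ ∧
      (SimpleGraph.induce (↑R : Set V) (mgraph e)).Connected ∧
      (SimpleGraph.induce (↑S : Set V) (mgraph e)).Connected ∧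
      (∑ u ∈ R, ∑ w ∈ S, e u w) = 1 ∧
      ({x, y} : Set (GLat V)) = {glmk (indFn (R ∪ {v})), glmk (indFn (S ∪ {v}))}) ∧
    (∃ u₁ u₂ : V, u₁ ≠ v ∧ u₂ ≠ v ∧
      qform e x (glmk (indFn {u₁})) = 1 ∧
      qform e y (glmk (indFn {u₂})) = 1 ∧
      (∀ u : V, u ≠ v → qform e x (glmk (indFn {u})) = 1 → u = u₁) ∧
      (∀ u : V, u ≠ v → qform e y (glmk (indFn {u})) = 1 → u = u₂) ∧
      (∀ w : V, w ≠ v → w ≠ u₁ → w ≠ u₂ →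
        qform e x (glmk (indFn {w})) ≤ 0 ∧ qform e y (glmk (indFn {w})) ≤ 0)) := by
  obtain ⟨ξ, rfl⟩ : ∃ ξ, glmk ξ = x := ⟨_, Quotient.out_eq x⟩
  obtain rfl : y = glmk (fun u => indFn {v} u - ξ u) := by
    rw [eq_sub_of_add_eq' hsum.symm]
    rfl
  obtain ⟨u₀, w₀, hu₀, hw₀, he, hstep, hflat, hv⟩ := exists_cut_edge hsym (by rwa [← qform_mk])
  obtain ⟨R, S, hcut, hx⟩ := exists_isSingleEdgeCut hsym h2conn hu₀ hw₀ he hstep hflat hv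
  have hy : glmk (fun u => indFn {v} u - ξ u) = glmk (indFn (S ∪ {v})) := by
    rw [hcut.glmk_indFn_singleton, ← hx] at hsum
    exact (add_left_cancel hsum).symm
  have hcut' := hcut.symm hsym
  refine ⟨⟨R, S, hcut.union_eq, disjoint_iff_inter_eq_empty.1 hcut.disjoint,
    hcut.induce_connected hsym (h2conn v), hcut'.induce_connected hsym (h2conn v),
    hcut.sum_sum_edges_eq_one, by rw [hx, hy]⟩, u₀, w₀, hu₀, hw₀, ?_⟩
  simp only [hx, hy, qform_mk]
  exact ⟨hcut.Bform_indFn_left_mem hsym, hcut'.Bform_indFn_left_mem hsym,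
    fun _ => hcut.eq_of_Bform_indFn_eq_one hsym, fun _ => hcut'.eq_of_Bform_indFn_eq_one hsym,
    fun w hw h₁ h₂ => ⟨hcut.Bform_indFn_nonpos hsym hw h₁, hcut'.Bform_indFn_nonpos hsym hw h₂⟩⟩

/-- Let `G` be a 2-connected multigraph, `v ∈ V`, and suppose `[{v}] = x + y` in `Λ(G)`
with `x·y = −1`. Then `V∖{v}` is partitioned into nonempty sets `R` and `S`, each
inducing a connected subgraph, with exactly one edge of `G` between `R` and `S`, such
that `{x, y} = {[R ∪ {v}], [S ∪ {v}]}`. Furthermore there are unique vertices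
`u₁, u₂ ≠ v` with `x·[{u₁}] = 1` and `y·[{u₂}] = 1`, and every vertex
`w ∉ {v, u₁, u₂}` satisfies `x·[{w}] ≤ 0` and `y·[{w}] ≤ 0`. -/
theorem stmt13 {V : Type*} [Fintype V] [DecidableEq V] (e : V → V → ℕ)
    (hsym : ∀ u v, e u v = e v u) (hloop : ∀ v, e v v = 0)
    (hconn : (mgraph e).Connected)
    (h2conn : ∀ v : V, (SimpleGraph.induce (({v}ᶜ : Finset V) : Set V) (mgraph e)).Connected)
    (v : V) (x y : GLat V)
    (hsum : glmk (indFn {v}) = x + y)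
    (hxy : qform e x y = -1) :
    (∃ R S : Finset V,
      R ∪ S = {v}ᶜ ∧ R ∩ S = ∅ ∧
      (SimpleGraph.induce (↑R : Set V) (mgraph e)).Connected ∧
      (SimpleGraph.induce (↑S : Set V) (mgraph e)).Connected ∧
      (∑ u ∈ R, ∑ w ∈ S, e u w) = 1 ∧
      ({x, y} : Set (GLat V)) = {glmk (indFn (R ∪ {v})), glmk (indFn (S ∪ {v}))}) ∧
    (∃ u₁ u₂ : V, u₁ ≠ v ∧ u₂ ≠ v ∧
      qform e x (glmk (indFn {u₁})) = 1 ∧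
      qform e y (glmk (indFn {u₂})) = 1 ∧
      (∀ u : V, u ≠ v → qform e x (glmk (indFn {u})) = 1 → u = u₁) ∧
      (∀ u : V, u ≠ v → qform e y (glmk (indFn {u})) = 1 → u = u₂) ∧
      (∀ w : V, w ≠ v → w ≠ u₁ → w ≠ u₂ →
        qform e x (glmk (indFn {w})) ≤ 0 ∧ qform e y (glmk (indFn {w})) ≤ 0)) :=
  stmt13_general e hsym h2conn v x y hsum hxy
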